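/- arXiv:1604.03655 — 4 statements merged into one kernel-verified Lean document; each statement's English description precedes it below -/
import Mathlib

section
/- For every n ≥ 1 and every family of nonatomic Borel probability measures μ_1, …, μ_n on [0,1], there exists a family of pairwise disjoint measurable subsets X_1, …, X_n of [0,1] (a partial allocation, not necessarily covering all of [0,1]) such that μ_i(X_i) ≥ 1/n for every agent i (proportionality with respect to the whole cake) and μ_i(X_i) ≥ μ_i(X_j) for all i, j (envy-freeness). -/
/-!
Cut the cake into `n` measurable pieces each of which every agent values at exactly `1/n`; handing
out these pieces in any way is then proportional and envy-free.

Such a consensus division comes from simultaneous halving of finitely many nonatomic measures: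
halving along a binary tree yields a monotone family `F t` of sets carrying the fraction `t` of
every measure, which is cut at the points `j/n`. Simultaneous halving is proved by induction on
the number of measures. A single nonatomic measure is halved by the intermediate value theorem
applied to its distribution function (Sierpiński). To add a measure `σ` to halvable measures
`μ i`, take the Lebesgue decomposition of `σ` with respect to `∑ μ i`. Its singular part lives on
a set that is null for every `μ i`, and there `σ` is halved alone. On the complement `σ` charges
no set that is null for all `μ i`, so `t ↦ σ (F t)` is continuous for a family `F` of the `μ i`,
and the intermediate value theorem yields a window `F (t + 1/2) \ F t` halving `σ` as well.
-/

open MeasureTheory Set Filter Topology Function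
open scoped ENNReal

variable {α ι : Type*}

/-- `dyadicChain half A k m` is the union of the first `m` of the `2 ^ k` cells obtained from `A`
by `k` rounds of splitting every cell `C` into `half C` and `C \ half C`. -/
def dyadicChain (half : Set α → Set α) (A : Set α) : ℕ → ℕ → Set α
  | 0, m => if m = 0 then ∅ else A
  | k + 1, m =>
    if m % 2 = 0 then dyadicChain half A k (m / 2)
    else dyadicChain half A k (m / 2) ∪
      half (dyadicChain half A k (m / 2 + 1) \ dyadicChain half A k (m / 2))

namespace dyadicChain

variable {half : Set α → Set α} {A : Set α}

theorem succ_two_mul (k m : ℕ) :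
    dyadicChain half A (k + 1) (2 * m) = dyadicChain half A k m := by
  simp [dyadicChain]

theorem succ_two_mul_add_one (k m : ℕ) :
    dyadicChain half A (k + 1) (2 * m + 1) = dyadicChain half A k m ∪
      half (dyadicChain half A k (m + 1) \ dyadicChain half A k m) := by
  simp [dyadicChain, Nat.add_mod, Nat.add_div]

theorem subset (hsub : ∀ B, half B ⊆ B) : ∀ k m, dyadicChain half A k m ⊆ A
  | 0, m => by by_cases hm : m = 0 <;> simp [dyadicChain, hm]
  | k + 1, m => by
    obtain ⟨j, rfl | rfl⟩ := Nat.even_or_odd' m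
    · simpa only [succ_two_mul] using subset hsub k j
    · rw [succ_two_mul_add_one]
      exact union_subset (subset hsub k j) ((hsub _).trans (sdiff_subset.trans (subset hsub k _)))

theorem mono (hsub : ∀ B, half B ⊆ B) : ∀ k, Monotone (dyadicChain half A k)
  | 0 => monotone_nat_of_le_succ fun m => by
    by_cases hm : m = 0 <;> simp [dyadicChain, hm]
  | k + 1 => monotone_nat_of_le_succ fun m => by
    obtain ⟨j, rfl | rfl⟩ := Nat.even_or_odd' m
    · rw [succ_two_mul_add_one, succ_two_mul]
      exact subset_union_left
    · rw [show 2 * j + 1 + 1 = 2 * (j + 1) by ring, succ_two_mul_add_one, succ_two_mul]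
      exact union_subset (mono hsub k j.le_succ) ((hsub _).trans sdiff_subset)

variable [MeasurableSpace α]

theorem measurableSet (hmeas : ∀ B, MeasurableSet B → MeasurableSet (half B))
    (hA : MeasurableSet A) : ∀ k m, MeasurableSet (dyadicChain half A k m)
  | 0, m => by by_cases hm : m = 0 <;> simp [dyadicChain, hm, hA]
  | k + 1, m => by
    obtain ⟨j, rfl | rfl⟩ := Nat.even_or_odd' m
    · simpa only [succ_two_mul] using measurableSet hmeas hA k j
    · rw [succ_two_mul_add_one]
      exact (measurableSet hmeas hA k j).union
        (hmeas _ ((measurableSet hmeas hA k _).diff (measurableSet hmeas hA k j)))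

theorem measureReal_eq {μ : ι → Measure α} [∀ i, IsFiniteMeasure (μ i)]
    (hsub : ∀ B, half B ⊆ B) (hmeas : ∀ B, MeasurableSet B → MeasurableSet (half B))
    (hval : ∀ B, MeasurableSet B → ∀ i, (μ i).real (half B) = (μ i).real B / 2)
    (hA : MeasurableSet A) (i : ι) :
    ∀ k m, m ≤ 2 ^ k → (μ i).real (dyadicChain half A k m) = m / 2 ^ k * (μ i).real A
  | 0, m, hm => by
    interval_cases m <;> simp [dyadicChain]
  | k + 1, m, hm => by
    obtain ⟨j, rfl | rfl⟩ := Nat.even_or_odd' m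
    · rw [succ_two_mul, measureReal_eq hsub hmeas hval hA i k j (by omega)]
      push_cast
      ring
    · have hC := (measurableSet hmeas hA k (j + 1)).diff (measurableSet hmeas hA k j)
      rw [succ_two_mul_add_one,
        measureReal_union (disjoint_sdiff_right.mono_right (hsub _)) (hmeas _ hC),
        hval _ hC, measureReal_sdiff (mono hsub k j.le_succ) (measurableSet hmeas hA k j),
        measureReal_eq hsub hmeas hval hA i k j (by omega),
        measureReal_eq hsub hmeas hval hA i k (j + 1) (by omega)]
      push_cast
      ring

end dyadicChain

variable [MeasurableSpace α]

def Halvable (μ : ι → Measure α) (A : Set α) : Prop :=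
  ∃ B ⊆ A, MeasurableSet B ∧ ∀ i, (μ i).real B = (μ i).real A / 2

def CanHalve (μ : ι → Measure α) : Prop :=
  ∀ ⦃A⦄, MeasurableSet A → Halvable μ A

theorem Halvable.of_inter_of_sdiff {μ : ι → Measure α} [∀ i, IsFiniteMeasure (μ i)]
    {A S : Set α} (hS : MeasurableSet S) (hAS : Halvable μ (A ∩ S)) (hAS' : Halvable μ (A \ S)) :
    Halvable μ A := by
  obtain ⟨B, hBA, hB, hμB⟩ := hAS
  obtain ⟨B', hBA', hB', hμB'⟩ := hAS'
  refine ⟨B ∪ B', union_subset (hBA.trans inter_subset_left) (hBA'.trans sdiff_subset),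
    hB.union hB', fun i => ?_⟩
  have hdisj : Disjoint B B' := disjoint_sdiff_inter.symm.mono hBA hBA'
  rw [measureReal_union hdisj hB', hμB, hμB', ← add_div, measureReal_inter_add_sdiff hS]

structure IsSplittingFamily (μ : ι → Measure α) (A : Set α) (F : ℝ → Set α) : Prop where
  mono : Monotone F
  measurableSet : ∀ t, MeasurableSet (F t)
  subset : ∀ t, F t ⊆ A
  measureReal_eq : ∀ i t, (μ i).real (F t) = projIcc (0 : ℝ) 1 zero_le_one t * (μ i).real A

theorem CanHalve.exists_halving_map {μ : ι → Measure α} (h : CanHalve μ) :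
    ∃ half : Set α → Set α, (∀ B, half B ⊆ B) ∧ ∀ B, MeasurableSet B →
      MeasurableSet (half B) ∧ ∀ i, (μ i).real (half B) = (μ i).real B / 2 := by
  have : ∀ B, ∃ C ⊆ B, MeasurableSet B →
      MeasurableSet C ∧ ∀ i, (μ i).real C = (μ i).real B / 2 := fun B => by
    by_cases hB : MeasurableSet B
    · obtain ⟨C, hCB, hC, hμC⟩ := h hB
      exact ⟨C, hCB, fun _ => ⟨hC, hμC⟩⟩
    · exact ⟨∅, empty_subset B, fun h => absurd h hB⟩
  choose half hsub hhalf using this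
  exact ⟨half, hsub, hhalf⟩

theorem CanHalve.exists_isSplittingFamily {μ : ι → Measure α} [∀ i, IsFiniteMeasure (μ i)]
    (h : CanHalve μ) {A : Set α} (hA : MeasurableSet A) : ∃ F, IsSplittingFamily μ A F := by
  obtain ⟨half, hsub, hhalf⟩ := h.exists_halving_map
  have hmeas B hB := (hhalf B hB).1
  set c : ℝ → ℝ := fun t => projIcc (0 : ℝ) 1 zero_le_one t
  have hc t : 0 ≤ c t ∧ c t ≤ 1 := (projIcc (0 : ℝ) 1 zero_le_one t).2
  set m : ℝ → ℕ → ℕ := fun t k => ⌊c t * 2 ^ k⌋₊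
  have hm_le t k : m t k ≤ 2 ^ k :=
    Nat.floor_le_of_le (by push_cast; exact mul_le_of_le_one_left (by positivity) (hc t).2)
  have hchain t : Monotone fun k => dyadicChain half A k (m t k) :=
    monotone_nat_of_le_succ fun k => by
      rw [← dyadicChain.succ_two_mul]
      refine dyadicChain.mono hsub _ (Nat.le_floor ?_)
      calc ((2 * m t k : ℕ) : ℝ) = 2 * m t k := by norm_cast
        _ ≤ 2 * (c t * 2 ^ k) := by gcongr; exact Nat.floor_le (mul_nonneg (hc t).1 (by positivity))
        _ = c t * 2 ^ (k + 1) := by ring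
  refine ⟨fun t => ⋃ k, dyadicChain half A k (m t k),
    ⟨fun s t hst => iUnion_mono fun k => dyadicChain.mono hsub k (Nat.floor_le_floor ?_),
    fun t => .iUnion fun k => dyadicChain.measurableSet hmeas hA k _,
    fun t => iUnion_subset fun k => dyadicChain.subset hsub k _, fun i t => ?_⟩⟩
  · exact mul_le_mul_of_nonneg_right (monotone_projIcc _ hst) (by positivity)
  refine tendsto_nhds_unique ((ENNReal.tendsto_toReal (measure_ne_top _ _)).comp
    (tendsto_measure_iUnion_atTop (hchain t))) ?_
  have hlim := ((tendsto_nat_floor_mul_div_atTop (hc t).1).comp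
    (tendsto_pow_atTop_atTop_of_one_lt one_lt_two)).mul_const ((μ i).real A)
  refine hlim.congr fun k => ?_
  simp only [comp_apply, ← measureReal_def]
  rw [dyadicChain.measureReal_eq hsub hmeas (fun B hB => (hhalf B hB).2) hA i k _ (hm_le t k)]

theorem Monotone.continuousAt_of_tendsto_sub {g : ℝ → ℝ} (hg : Monotone g) {t : ℝ}
    (h : Tendsto (fun δ => g (t + δ) - g (t - δ)) (𝓝[>] 0) (𝓝 0)) : ContinuousAt g t := by
  refine Metric.continuousAt_iff.2 fun ε hε => ?_
  obtain ⟨δ, hδε, hδ⟩ := ((h.eventually (gt_mem_nhds hε)).and self_mem_nhdsWithin).exists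
  refine ⟨δ, hδ, fun s hs => ?_⟩
  rw [Real.dist_eq, abs_lt] at hs ⊢
  have := hg (show t - δ ≤ s by linarith)
  have := hg (show s ≤ t + δ by linarith)
  have := hg (show t - δ ≤ t by linarith [show (0 : ℝ) < δ from hδ])
  have := hg (show t ≤ t + δ by linarith [show (0 : ℝ) < δ from hδ])
  constructor <;> linarith

theorem continuous_measureReal_of_monotone {σ : Measure α} [IsFiniteMeasure σ] {F : ℝ → Set α}
    (hF : Monotone F) (hFm : ∀ t, MeasurableSet (F t))
    (hjump : ∀ t, σ (⋂ δ > 0, F (t + δ) \ F (t - δ)) = 0) :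
    Continuous fun t => σ.real (F t) := by
  refine continuous_iff_continuousAt.2 fun t =>
    Monotone.continuousAt_of_tendsto_sub (fun s u h => measureReal_mono (hF h)) ?_
  have hlim : Tendsto (fun δ => σ (F (t + δ) \ F (t - δ))) (𝓝[>] 0) (𝓝 0) := by
    rw [← hjump t]
    refine tendsto_measure_biInter_gt (fun δ _ => ((hFm _).diff (hFm _)).nullMeasurableSet)
      (fun δ δ' _ hδ => sdiff_subset_sdiff (hF (by linarith)) (hF (by linarith)))
      ⟨1, one_pos, measure_ne_top _ _⟩
  refine (((ENNReal.tendsto_toReal ENNReal.zero_ne_top).comp hlim).congr' ?_)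
  filter_upwards [self_mem_nhdsWithin] with δ (hδ : 0 < δ)
  rw [comp_apply, ← measureReal_def, measureReal_sdiff (hF (by linarith)) (hFm _)]

namespace IsSplittingFamily

variable {μ : ι → Measure α} [∀ i, IsFiniteMeasure (μ i)] {A : Set α} {F : ℝ → Set α}

theorem measureReal_sdiff (hF : IsSplittingFamily μ A F) (i : ι) {s u : ℝ} (hsu : s ≤ u) :
    (μ i).real (F u \ F s) =
      ((projIcc (0 : ℝ) 1 zero_le_one u : ℝ) - projIcc (0 : ℝ) 1 zero_le_one s) * (μ i).real A := by
  rw [MeasureTheory.measureReal_sdiff (hF.mono hsu) (hF.measurableSet s), hF.measureReal_eq,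
    hF.measureReal_eq, sub_mul]

theorem measureReal_sdiff_le (hF : IsSplittingFamily μ A F) (i : ι) {s u : ℝ} (hsu : s ≤ u) :
    (μ i).real (F u \ F s) ≤ (u - s) * (μ i).real A := by
  rw [hF.measureReal_sdiff i hsu]
  refine mul_le_mul_of_nonneg_right ?_ measureReal_nonneg
  exact (le_abs_self _).trans
    ((abs_projIcc_sub_projIcc _).trans (abs_of_nonneg (sub_nonneg.2 hsu)).le)

theorem measure_biInter_sdiff_eq_zero (hF : IsSplittingFamily μ A F) (i : ι) (t : ℝ) :
    μ i (⋂ δ > 0, F (t + δ) \ F (t - δ)) = 0 := by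
  refine (measureReal_eq_zero_iff).1 (le_antisymm ?_ measureReal_nonneg)
  have hlim : Tendsto (fun δ : ℝ => 2 * δ * (μ i).real A) (𝓝[>] 0) (𝓝 0) := by
    have := (show Continuous fun δ : ℝ => 2 * δ * (μ i).real A by fun_prop).tendsto 0
    simpa using this.mono_left nhdsWithin_le_nhds
  refine ge_of_tendsto hlim ?_
  filter_upwards [self_mem_nhdsWithin] with δ (hδ : 0 < δ)
  calc (μ i).real (⋂ δ > 0, F (t + δ) \ F (t - δ)) ≤ (μ i).real (F (t + δ) \ F (t - δ)) :=
        measureReal_mono (biInter_subset_of_mem hδ)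
    _ ≤ (t + δ - (t - δ)) * (μ i).real A := hF.measureReal_sdiff_le i (by linarith)
    _ = 2 * δ * (μ i).real A := by ring

end IsSplittingFamily

/-- The intermediate value theorem for the `μ none`-measure of the window `F (t + 1/2) \ F t`,
which carries half of every `μ (some i)`. -/
theorem IsSplittingFamily.halvable {μ : Option ι → Measure α} [∀ i, IsFiniteMeasure (μ i)]
    {A : Set α} {F : ℝ → Set α} (hF : IsSplittingFamily (fun i => μ (some i)) A F)
    (hac : ∀ E ⊆ A, (∀ i, μ (some i) E = 0) → μ none E = 0) : Halvable μ A := by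
  set g : ℝ → ℝ := fun t => (μ none).real (F t)
  have hg : Continuous g := continuous_measureReal_of_monotone hF.mono hF.measurableSet fun t =>
    hac _ ((biInter_subset_of_mem one_pos).trans (sdiff_subset.trans (hF.subset _)))
      fun i => hF.measure_biInter_sdiff_eq_zero i t
  have hg0 : g 0 = 0 := by
    refine (measureReal_eq_zero_iff).2 (hac _ (hF.subset 0) fun i => ?_)
    refine (measureReal_eq_zero_iff).1 ?_
    rw [hF.measureReal_eq]
    simp
  have hg1 : g 1 = (μ none).real A := by
    refine congrArg ENNReal.toReal (measure_eq_measure_of_null_sdiff (hF.subset 1)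
      (hac _ sdiff_subset fun i => (measureReal_eq_zero_iff).1 ?_))
    rw [MeasureTheory.measureReal_sdiff (hF.subset 1) (hF.measurableSet 1), hF.measureReal_eq]
    simp
  obtain ⟨t, ht, hgt⟩ : ∃ t ∈ uIcc 0 (1 / 2), g (t + 1 / 2) - g t = (μ none).real A / 2 := by
    refine intermediate_value_uIcc (f := fun t => g (t + 1 / 2) - g t) (by fun_prop) ?_
    show _ ∈ uIcc (g (0 + 1 / 2) - g 0) (g (1 / 2 + 1 / 2) - g (1 / 2))
    rw [mem_uIcc, zero_add, add_halves, hg0, hg1]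
    rcases le_total (g (1 / 2)) ((μ none).real A / 2) with h | h
    · exact Or.inl ⟨by linarith, by linarith⟩
    · exact Or.inr ⟨by linarith, by linarith⟩
  rw [uIcc_of_le (by norm_num)] at ht
  refine ⟨F (t + 1 / 2) \ F t, sdiff_subset.trans (hF.subset _),
    (hF.measurableSet _).diff (hF.measurableSet _), ?_⟩
  rintro (_ | i)
  · rw [← hgt, MeasureTheory.measureReal_sdiff (hF.mono (by linarith)) (hF.measurableSet t)]
  · rw [hF.measureReal_sdiff i (by linarith),
      projIcc_of_mem _ ⟨by linarith [ht.1], by linarith [ht.2]⟩,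
      projIcc_of_mem _ ⟨ht.1, by linarith [ht.2]⟩]
    ring

/-- Split `A` along a set `S` from the Lebesgue decomposition of `μ none` with respect to
`∑ i, μ (some i)`: `A \ S` is null for every `μ (some i)`, and on `A ∩ S` the measure `μ none`
is absolutely continuous. -/
theorem CanHalve.option [Fintype ι] {μ : Option ι → Measure α} [∀ i, IsFiniteMeasure (μ i)]
    (hnone : CanHalve fun _ : Unit => μ none) (hsome : CanHalve fun i => μ (some i)) :
    CanHalve μ := by
  intro A hA
  set ν := ∑ i, μ (some i)
  have hν E : ν E = 0 ↔ ∀ i, μ (some i) E = 0 := by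
    simp [ν, Measure.finsetSum_apply, Finset.sum_eq_zero_iff]
  obtain ⟨S, hS, hσS, hνS⟩ := (μ none).mutuallySingular_singularPart ν
  refine Halvable.of_inter_of_sdiff hS ?_ ?_
  · obtain ⟨F, hF⟩ := hsome.exists_isSplittingFamily (hA.inter hS)
    refine hF.halvable fun E hE hE0 => ?_
    rw [(μ none).haveLebesgueDecomposition_add ν, Measure.add_apply,
      measure_mono_null (hE.trans inter_subset_right) hσS,
      withDensity_absolutelyContinuous _ _ ((hν E).2 hE0), add_zero]
  · obtain ⟨B, hBA, hB, hσB⟩ := hnone (hA.diff hS)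
    have hnull i : μ (some i) (A \ S) = 0 :=
      (hν _).1 (measure_mono_null (fun x hx => hx.2) hνS) i
    refine ⟨B, hBA, hB, ?_⟩
    rintro (_ | i)
    · exact hσB ()
    · rw [(measureReal_eq_zero_iff).2 (hnull i), (measureReal_eq_zero_iff).2
        (measure_mono_null hBA (hnull i)), zero_div]

theorem canHalve_of_forall_const [Finite ι] {μ : ι → Measure α} [∀ i, IsFiniteMeasure (μ i)]
    (h : ∀ i, CanHalve fun _ : Unit => μ i) : CanHalve μ := by
  induction ι using Finite.induction_empty_option with
  | of_equiv e ih =>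
    intro A hA
    obtain ⟨B, hBA, hB, hμB⟩ := ih (μ := fun i => μ (e i)) (fun i => h (e i)) hA
    exact ⟨B, hBA, hB, e.forall_congr_right.1 hμB⟩
  | h_empty => exact fun A hA => ⟨A, subset_rfl, hA, fun i => i.elim⟩
  | h_option ih => exact CanHalve.option (h none) (ih fun i => h (some i))

theorem continuous_measureReal_inter_preimage_Iic (σ : Measure α) [IsFiniteMeasure σ]
    [NullSingletonClass σ] {f : α → ℝ} (hf : Measurable f) (hinj : Injective f)
    {A : Set α} (hA : MeasurableSet A) : Continuous fun t => σ.real (A ∩ f ⁻¹' Iic t) := by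
  refine continuous_measureReal_of_monotone
    (fun s t hst => inter_subset_inter_right _ fun x hx => le_trans hx hst)
    (fun t => hA.inter (hf measurableSet_Iic)) fun t => measure_mono_null (fun x hx => ?_)
      ((subsingleton_singleton (a := t)).preimage hinj |>.measure_zero σ)
  simp only [mem_iInter, Set.mem_sdiff, mem_inter_iff, mem_preimage, mem_Iic, not_and,
    not_le] at hx
  exact le_antisymm (le_of_forall_pos_le_add fun δ hδ => (hx δ hδ).1.2)
    (le_of_forall_pos_lt_add fun δ hδ => by linarith [(hx δ hδ).2 (hx δ hδ).1.1])

/-- Sierpiński: the intermediate value theorem for `t ↦ σ (A ∩ {f ≤ t})`. -/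
theorem canHalve_const_of_injective (σ : Measure α) [IsFiniteMeasure σ] [NullSingletonClass σ]
    {f : α → ℝ} (hf : Measurable f) (hinj : Injective f) : CanHalve fun _ : Unit => σ := by
  intro A hA
  set F : ℝ → Set α := fun t => A ∩ f ⁻¹' Iic t
  have hFm t : MeasurableSet (F t) := hA.inter (hf measurableSet_Iic)
  have hF : Monotone F := fun s t hst => inter_subset_inter_right _ fun x hx => le_trans hx hst
  have hbot : Tendsto (fun t => σ.real (F t)) atBot (𝓝 0) := by
    have h := tendsto_measure_iInter_atBot (μ := σ) (fun t => (hFm t).nullMeasurableSet) hF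
      ⟨0, measure_ne_top _ _⟩
    have hempty : ⋂ t : ℝ, Iic t = ∅ :=
      eq_empty_of_forall_notMem fun x hx => by linarith [mem_Iic.1 (mem_iInter.1 hx (x - 1))]
    rw [← inter_iInter, ← preimage_iInter, hempty, preimage_empty, inter_empty,
      measure_empty] at h
    exact ENNReal.toReal_zero ▸ (ENNReal.tendsto_toReal ENNReal.zero_ne_top).comp h
  have htop : Tendsto (fun t => σ.real (F t)) atTop (𝓝 (σ.real A)) := by
    have h := tendsto_measure_iUnion_atTop (μ := σ) hF
    rw [← inter_iUnion, ← preimage_iUnion, iUnion_Iic, preimage_univ, inter_univ] at h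
    exact (ENNReal.tendsto_toReal (measure_ne_top _ _)).comp h
  obtain ⟨t, ht⟩ : σ.real A / 2 ∈ range fun t => σ.real (F t) := by
    refine mem_range_of_exists_le_of_exists_ge
      (continuous_measureReal_inter_preimage_Iic σ hf hinj hA) ?_ ?_
    all_goals rcases (measureReal_nonneg (μ := σ) (s := A)).eq_or_lt with h0 | hpos
    · exact ⟨0, by linarith [measureReal_mono (μ := σ) (inter_subset_left : F 0 ⊆ A)]⟩
    · exact ((hbot.eventually (gt_mem_nhds (half_pos hpos))).exists).imp fun _ => le_of_lt
    · exact ⟨0, by linarith [measureReal_nonneg (μ := σ) (s := F 0)]⟩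
    · exact ((htop.eventually (lt_mem_nhds (half_lt_self hpos))).exists).imp fun _ => le_of_lt
  exact ⟨F t, inter_subset_left, hFm t, fun _ => ht⟩

theorem IsSplittingFamily.exists_equal_division {μ : ι → Measure α} [∀ i, IsFiniteMeasure (μ i)]
    {A : Set α} {F : ℝ → Set α} (hF : IsSplittingFamily μ A F) (n : ℕ) :
    ∃ Y : Fin n → Set α, (∀ j, MeasurableSet (Y j)) ∧ Pairwise (Disjoint on Y) ∧
      (∀ j, Y j ⊆ A) ∧ ∀ i j, (μ i).real (Y j) = (μ i).real A / n := by
  have hcut (j : ℕ) (hj : j ≤ n) : (projIcc (0 : ℝ) 1 zero_le_one (j / n) : ℝ) = j / n := by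
    rcases n.eq_zero_or_pos with rfl | hn
    · simp
    · rw [projIcc_of_mem _ ⟨by positivity, div_le_one_of_le₀ (by exact_mod_cast hj) n.cast_nonneg⟩]
  have hstep (j : Fin n) : ((j : ℕ) : ℝ) / n ≤ ((j + 1 : ℕ) : ℝ) / n := by gcongr; simp
  refine ⟨fun j => F ((j + 1 : ℕ) / n) \ F ((j : ℕ) / n),
    fun j => (hF.measurableSet _).diff (hF.measurableSet _), ?_,
    fun j => sdiff_subset.trans (hF.subset _), fun i j => ?_⟩
  · refine (pairwise_disjoint_on _).2 fun j j' hjj' => ?_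
    refine disjoint_sdiff_right.mono_left (sdiff_subset.trans (hF.mono ?_))
    gcongr
    exact_mod_cast hjj'
  · rw [hF.measureReal_sdiff i (hstep j), hcut _ j.isLt, hcut _ j.isLt.le]
    field_simp
    push_cast
    ring

theorem proportional_envy_free_partial_allocation_exists_general
    (n : ℕ)
    (μ : Fin n → Measure (Set.Icc (0:ℝ) 1))
    (hprob : ∀ i, IsProbabilityMeasure (μ i))
    (hna : ∀ i, NoAtoms (μ i)) :
    ∃ X : Fin n → Set (Set.Icc (0:ℝ) 1),
      (∀ i, MeasurableSet (X i)) ∧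
      (Pairwise fun i j => Disjoint (X i) (X j)) ∧
      (∀ i, (n : ℝ≥0∞)⁻¹ ≤ μ i (X i)) ∧
      (∀ i j, μ i (X j) ≤ μ i (X i)) := by
  have := hprob
  have : ∀ i, NullSingletonClass (μ i) := hna
  have hhalve : CanHalve μ := canHalve_of_forall_const fun i =>
    canHalve_const_of_injective (μ i) measurable_subtype_coe Subtype.val_injective
  obtain ⟨F, hF⟩ := hhalve.exists_isSplittingFamily MeasurableSet.univ
  obtain ⟨X, hXm, hdisj, -, hX⟩ := hF.exists_equal_division n
  have hXn i j : μ i (X j) = (n : ℝ≥0∞)⁻¹ := by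
    rw [← ofReal_measureReal, hX, probReal_univ, one_div,
      ENNReal.ofReal_inv_of_pos (Nat.cast_pos.2 j.pos), ENNReal.ofReal_natCast]
  exact ⟨X, hXm, hdisj, fun i => (hXn i i).ge, fun i j => (hXn i j).trans (hXn i i).symm |>.le⟩

/-- For every `n ≥ 1` and nonatomic Borel probability measures `μ i` on `[0,1]`,
there is a partial allocation (pairwise disjoint measurable pieces, not necessarily
covering the cake) that is proportional with respect to the whole cake
(`μ i (X i) ≥ 1/n`) and envy-free (`μ i (X i) ≥ μ i (X j)`). -/
theorem proportional_envy_free_partial_allocation_exists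
    (n : ℕ) (hn : 1 ≤ n)
    (μ : Fin n → Measure (Set.Icc (0:ℝ) 1))
    (hprob : ∀ i, IsProbabilityMeasure (μ i))
    (hna : ∀ i, NoAtoms (μ i)) :
    ∃ X : Fin n → Set (Set.Icc (0:ℝ) 1),
      (∀ i, MeasurableSet (X i)) ∧
      (Pairwise fun i j => Disjoint (X i) (X j)) ∧
      (∀ i, (n : ℝ≥0∞)⁻¹ ≤ μ i (X i)) ∧
      (∀ i j, μ i (X j) ≤ μ i (X i)) :=
  proportional_envy_free_partial_allocation_exists_general n μ hprob hna
end

section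
/- Existence content of the Core Protocol: let n ≥ 2 and let μ_1, …, μ_n be nonatomic Borel probability measures on [0,1], with agent 1 as the cutter. There exist cut points 0 = t_0 ≤ t_1 ≤ ⋯ ≤ t_n = 1 with μ_1([t_{k-1}, t_k]) = 1/n for every k ∈ {1,…,n}, an injective map σ from agents {1,…,n} to pieces {1,…,n}, and points s_i ∈ [t_{σ(i)-1}, t_{σ(i)}] such that, setting X_i = [s_i, t_{σ(i)}]: (i) μ_i(X_i) ≥ μ_i(X_j) for all i, j (the partial allocation is envy-free); (ii) s_1 = t_{σ(1)-1}, i.e. the cutter receives a complete piece; and (iii) s_i = t_{σ(i)-1} for at least one agent i ≠ 1, i.e. at least one non-cutter agent also receives a complete piece. -/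
/-!
The cutter's cut points come from the intermediate value theorem for his distribution function,
which is continuous because his valuation has no atoms.

For a mesh `ε > 0`, the `n - 1` other agents run an ascending auction on the `n` pieces, the price
of a piece being the number of `ε`-steps by which its left end is trimmed: an unassigned agent
takes the piece he likes best at the price that outbids its holder, who becomes unassigned.
Every bid either raises a price or makes a free piece held, so the auction stops, leaving every
agent with no envy for any piece trimmed one step more than its price. A free piece is left over;
it is untrimmed and goes to the cutter, who values every full piece at `1/n`. The last bid was
for a free, hence untrimmed, piece. Along an ultrafilter on the meshes `1/(N+1)` the assignments
stabilise and the trim points converge, and continuity of the valuations turns approximate into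
exact envy-freeness.
-/

open MeasureTheory Set Filter Topology Function Finset ProbabilityTheory
open scoped ENNReal

lemma Ultrafilter.exists_eventually_eq {α β : Type*} [Finite β] (U : Ultrafilter α) (g : α → β) :
    ∃ b, ∀ᶠ a in U, g a = b := by
  obtain ⟨b, hb⟩ := (U.map g).eq_pure_of_finite
  exact ⟨b, Ultrafilter.mem_map.1 (hb ▸ rfl : ({b} : Set β) ∈ U.map g)⟩

lemma IsCompact.exists_tendsto_ultrafilter {α X : Type*} [TopologicalSpace X] {s : Set X}
    (hs : IsCompact s) (U : Ultrafilter α) {g : α → X} (hg : ∀ a, g a ∈ s) :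
    ∃ x ∈ s, Tendsto g U (𝓝 x) :=
  hs.ultrafilter_le_nhds' (U.map g) (Ultrafilter.mem_map.2 (univ_mem' hg))

namespace ProbabilityTheory

variable {μ : Measure ℝ} [IsProbabilityMeasure μ] [NullSingletonClass μ]

lemma leftLim_cdf (x : ℝ) : leftLim (cdf μ) x = cdf μ x := by
  have h := (cdf μ).measure_singleton x
  rw [measure_cdf, measure_singleton, eq_comm, ENNReal.ofReal_eq_zero, sub_nonpos] at h
  exact le_antisymm ((monotone_cdf μ).leftLim_le le_rfl) h

lemma continuous_cdf : Continuous (cdf μ) :=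
  continuous_iff_continuousAt.2 fun x =>
    (monotone_cdf μ).continuousAt_iff_leftLim_eq_rightLim.2 <| by rw [leftLim_cdf, (cdf μ).rightLim_eq]

lemma measure_Icc_eq_ofReal_cdf_sub (a b : ℝ) :
    μ (Icc a b) = ENNReal.ofReal (cdf μ b - cdf μ a) := by
  calc μ (Icc a b) = (cdf μ).measure (Icc a b) := by rw [measure_cdf]
    _ = _ := by rw [StieltjesFunction.measure_Icc, leftLim_cdf]

lemma continuous_measure_Icc_left (b : ℝ) : Continuous fun s => μ (Icc s b) := by
  simp_rw [measure_Icc_eq_ofReal_cdf_sub]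
  exact ENNReal.continuous_ofReal.comp (continuous_const.sub continuous_cdf)

lemma cdf_eq_zero_and_eq_one_of_measure_Icc {a b : ℝ} (h : μ (Icc a b) = 1) :
    cdf μ a = 0 ∧ cdf μ b = 1 := by
  rw [measure_Icc_eq_ofReal_cdf_sub, ENNReal.ofReal_eq_one] at h
  have := cdf_nonneg μ a
  have := cdf_le_one μ b
  constructor <;> linarith

end ProbabilityTheory

lemma exists_monotone_cuts {F : ℝ → ℝ} (hF : Continuous F) (hF_mono : Monotone F) {a b : ℝ}
    (hab : a ≤ b) (ha : F a = 0) (hb : F b = 1) {n : ℕ} (hn : 0 < n) :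
    ∃ t : Fin (n + 1) → ℝ, t 0 = a ∧ t (Fin.last n) = b ∧ Monotone t ∧ ∀ k, F (t k) = k / n := by
  have hval : ∀ k : Fin (n + 1), (k / n : ℝ) ∈ Icc (F a) (F b) := fun k => by
    rw [ha, hb]
    exact ⟨by positivity, div_le_one_of_le₀ (by exact_mod_cast k.is_le) (Nat.cast_nonneg n)⟩
  choose x _ hx using fun k => intermediate_value_Icc hab hF.continuousOn (hval k)
  let t k := if k = 0 then a else if k = Fin.last n then b else x k
  have ht : ∀ k, F (t k) = k / n := fun k => by
    by_cases h0 : k = 0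
    · simp [t, h0, ha]
    · by_cases h1 : k = Fin.last n
      · simp [t, h1, hb, hn.ne']
      · simp [t, h0, h1, hx]
  refine ⟨t, rfl, by simp [t, hn.ne'], fun k l hkl => ?_, ht⟩
  rcases hkl.eq_or_lt with rfl | hlt
  · rfl
  · refine (hF_mono.reflect_lt ?_).le
    rw [ht, ht]
    gcongr
    exact_mod_cast hlt

def trimPoint (a b δ : ℝ) (p : ℕ) : ℝ := min b (a + p * δ)

section trimPoint

variable {a b δ : ℝ}

lemma trimPoint_zero (hab : a ≤ b) : trimPoint a b δ 0 = a := by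
  simp [trimPoint, hab]

lemma trimPoint_mono (hδ : 0 ≤ δ) : Monotone (trimPoint a b δ) := fun p q hpq =>
  min_le_min_left b (by gcongr)

lemma trimPoint_mem_Icc (hab : a ≤ b) (hδ : 0 ≤ δ) (p : ℕ) : trimPoint a b δ p ∈ Icc a b :=
  ⟨(trimPoint_zero hab).symm.trans_le (trimPoint_mono hδ (Nat.zero_le p)), min_le_left _ _⟩

lemma trimPoint_of_le {p : ℕ} (h : b ≤ a + p * δ) : trimPoint a b δ p = b := min_eq_left h

lemma trimPoint_succ_le (hδ : 0 ≤ δ) (p : ℕ) : trimPoint a b δ (p + 1) ≤ trimPoint a b δ p + δ := by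
  rw [trimPoint, trimPoint, ← min_add_add_right]
  push_cast
  exact min_le_min (by linarith) (by linarith)

end trimPoint

namespace Auction

structure State (ι κ : Type*) where
  assign : ι → Option κ
  price : κ → ℕ

open Classical

noncomputable section

variable {ι κ α : Type*} [LinearOrder α]

namespace State

variable (S : State ι κ)

def Held (k : κ) : Prop := ∃ i, S.assign i = some k

structure Valid (V : ι → κ → ℕ → α) : Prop where
  injective : ∀ i j k, S.assign i = some k → S.assign j = some k → i = j
  price_of_not_held : ∀ k, ¬ S.Held k → S.price k = 0
  envyFree : ∀ i k, S.assign i = some k → ∀ l, V i l (S.price l + 1) ≤ V i k (S.price k)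
  exists_price_zero : (∀ i, S.assign i ≠ none) → ∃ i k, S.assign i = some k ∧ S.price k = 0

def potential [Fintype κ] (N : ℕ) : ℕ := ∑ k, (N - S.price k) + #{k | ¬ S.Held k}

def bidPrice (k : κ) : ℕ := if S.Held k then S.price k + 1 else S.price k

def bid (z : ι) (k : κ) : State ι κ where
  assign i := if i = z then some k else if S.assign i = some k then none else S.assign i
  price := update S.price k (S.bidPrice k)

variable {S} {z i : ι} {k l : κ}

lemma bid_assign_eq_some :
    (S.bid z k).assign i = some l ↔ i = z ∧ l = k ∨ i ≠ z ∧ l ≠ k ∧ S.assign i = some l := by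
  simp only [bid]
  split_ifs <;> aesop

lemma held_bid (hz : S.assign z = none) : (S.bid z k).Held l ↔ l = k ∨ S.Held l := by
  simp only [Held, bid_assign_eq_some]
  constructor
  · rintro ⟨i, ⟨-, rfl⟩ | ⟨-, -, h⟩⟩
    exacts [Or.inl rfl, Or.inr ⟨i, h⟩]
  · rintro (rfl | ⟨i, h⟩)
    · exact ⟨z, Or.inl ⟨rfl, rfl⟩⟩
    · by_cases hl : l = k
      · exact ⟨z, Or.inl ⟨rfl, hl⟩⟩
      · exact ⟨i, Or.inr ⟨fun hi => by simp [hi, hz] at h, hl, h⟩⟩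

lemma bid_price_self : (S.bid z k).price k = S.bidPrice k := by
  simp only [bid, update_self]

lemma bid_price_of_ne (h : l ≠ k) : (S.bid z k).price l = S.price l := by
  simp only [bid, update_of_ne h]

lemma price_le_bidPrice (k : κ) : S.price k ≤ S.bidPrice k := by
  unfold bidPrice; split_ifs <;> omega

lemma bidPrice_le_succ (k : κ) : S.bidPrice k ≤ S.price k + 1 := by
  unfold bidPrice; split_ifs <;> omega

lemma price_le_bid_price (l : κ) : S.price l ≤ (S.bid z k).price l := by
  rcases eq_or_ne l k with rfl | h
  · rw [bid_price_self]; exact price_le_bidPrice l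
  · rw [bid_price_of_ne h]

variable {V : ι → κ → ℕ → α} {N : ℕ}

lemma Valid.envyFree_bid (hS : S.Valid V) (hV_anti : ∀ i k, Antitone (V i k))
    (hV_floor : ∀ i k l q, V i k N ≤ V i l q)
    (hk_max : ∀ l, S.bidPrice l ≤ N → V z l (S.bidPrice l) ≤ V z k (S.bidPrice k)) (m : κ)
    (him : (S.bid z k).assign i = some m) (l : κ) :
    V i l ((S.bid z k).price l + 1) ≤ V i m ((S.bid z k).price m) := by
  rcases bid_assign_eq_some.1 him with ⟨rfl, rfl⟩ | ⟨-, hmk, hi⟩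
  · rw [bid_price_self]
    rcases eq_or_ne l m with rfl | hl
    · rw [bid_price_self]
      exact hV_anti _ _ (Nat.le_succ _)
    · rw [bid_price_of_ne hl]
      by_cases hfeas : S.bidPrice l ≤ N
      · exact (hV_anti _ _ (S.bidPrice_le_succ l)).trans (hk_max l hfeas)
      · -- `l` is held at the cap `N`, where every piece is worth least
        exact (hV_anti _ _ (by have := S.bidPrice_le_succ l; omega)).trans (hV_floor ..)
  · rw [bid_price_of_ne hmk]
    exact (hV_anti _ _ (Nat.succ_le_succ (price_le_bid_price l))).trans (hS.envyFree i m hi l)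

lemma Valid.bid (hS : S.Valid V) (hz : S.assign z = none) (hV_anti : ∀ i k, Antitone (V i k))
    (hV_floor : ∀ i k l q, V i k N ≤ V i l q)
    (hk_max : ∀ l, S.bidPrice l ≤ N → V z l (S.bidPrice l) ≤ V z k (S.bidPrice k)) :
    (S.bid z k).Valid V where
  injective i j m hi hj := by
    rw [bid_assign_eq_some] at hi hj
    rcases hi with ⟨rfl, rfl⟩ | ⟨-, hmk, hi⟩ <;> rcases hj with ⟨rfl, hmk'⟩ | ⟨-, hmk', hj⟩
    exacts [rfl, absurd rfl hmk', absurd hmk' hmk, hS.injective i j m hi hj]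
  price_of_not_held m hm := by
    rw [held_bid hz, not_or] at hm
    rw [bid_price_of_ne hm.1]
    exact hS.price_of_not_held m hm.2
  envyFree _ := hS.envyFree_bid hV_anti hV_floor hk_max
  exists_price_zero hall := by
    -- a previous holder of `k` would now be unassigned
    have hk : ¬ S.Held k := by
      rintro ⟨y, hy⟩
      have hyz : y ≠ z := by rintro rfl; simp [hz] at hy
      exact hall y (by simp [State.bid, hyz, hy])
    refine ⟨z, k, by simp [State.bid], ?_⟩
    rw [bid_price_self, bidPrice, if_neg hk, hS.price_of_not_held k hk]

lemma potential_bid [Fintype κ] (hz : S.assign z = none) (hk : S.bidPrice k ≤ N) :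
    (S.bid z k).potential N + 1 = S.potential N := by
  unfold potential
  have hprice : ∑ l, (N - (S.bid z k).price l) =
      (N - S.bidPrice k) + ∑ l ∈ univ.erase k, (N - S.price l) := by
    rw [← add_sum_erase _ _ (mem_univ k), bid_price_self]
    exact congrArg _ (sum_congr rfl fun l hl => by rw [bid_price_of_ne (ne_of_mem_erase hl)])
  have hfree : ({l | ¬ (S.bid z k).Held l} : Finset κ) = ({l | ¬ S.Held l} : Finset κ).erase k := by
    ext l
    simp only [held_bid hz, mem_filter, mem_erase]
    tauto
  rw [hprice, hfree, ← add_sum_erase _ _ (mem_univ k)]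
  by_cases hk' : S.Held k
  · have hbid : S.bidPrice k = S.price k + 1 := if_pos hk'
    have hmem : k ∉ ({l | ¬ S.Held l} : Finset κ) := fun h => (mem_filter.1 h).2 hk'
    rw [erase_eq_of_notMem hmem]
    omega
  · have hbid : S.bidPrice k = S.price k := if_neg hk'
    have hmem : k ∈ ({l | ¬ S.Held l} : Finset κ) := mem_filter.2 ⟨mem_univ k, hk'⟩
    have := card_pos.2 ⟨k, hmem⟩
    rw [card_erase_of_mem hmem]
    omega

lemma exists_not_held [Fintype ι] [Fintype κ] (hcard : Fintype.card ι < Fintype.card κ)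
    (S : State ι κ) : ∃ k, ¬ S.Held k := by
  by_contra! h
  choose f hf using h
  have hf_inj : Injective f := fun k l hkl =>
    Option.some_injective _ ((hf k).symm.trans (hkl ▸ hf l))
  exact hcard.not_ge (Fintype.card_le_of_injective f hf_inj)

lemma Valid.exists_potential_lt [Fintype ι] [Fintype κ] (hcard : Fintype.card ι < Fintype.card κ)
    (hV_anti : ∀ i k, Antitone (V i k)) (hV_floor : ∀ i k l q, V i k N ≤ V i l q)
    (hS : S.Valid V) (hz : S.assign z = none) :
    ∃ S' : State ι κ, S'.Valid V ∧ S'.potential N < S.potential N := by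
  obtain ⟨k₀, hk₀⟩ := exists_not_held hcard S
  have hfeas : ({l | S.bidPrice l ≤ N} : Finset κ).Nonempty := ⟨k₀, mem_filter.2
    ⟨mem_univ k₀, by rw [bidPrice, if_neg hk₀, hS.price_of_not_held k₀ hk₀]; omega⟩⟩
  obtain ⟨k, hk, hk_max⟩ := exists_max_image _ (fun l => V z l (S.bidPrice l)) hfeas
  simp only [mem_filter, Finset.mem_univ, true_and] at hk hk_max
  refine ⟨S.bid z k, hS.bid hz hV_anti hV_floor hk_max, ?_⟩
  have := potential_bid hz hk
  omega

def init : State ι κ := ⟨fun _ => none, fun _ => 0⟩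

lemma valid_init [Nonempty ι] : (init : State ι κ).Valid V where
  injective _ _ _ hi := by simp [init] at hi
  price_of_not_held _ _ := rfl
  envyFree _ _ hi := by simp [init] at hi
  exists_price_zero h := absurd rfl (h (Classical.arbitrary ι))

lemma exists_valid_complete [Fintype ι] [Fintype κ] [Nonempty ι]
    (hcard : Fintype.card ι < Fintype.card κ) (hV_anti : ∀ i k, Antitone (V i k))
    (hV_floor : ∀ i k l q, V i k N ≤ V i l q) :
    ∃ S : State ι κ, S.Valid V ∧ ∀ i, S.assign i ≠ none := by
  obtain ⟨S, hS, hmin⟩ := (measure fun S : State ι κ => S.potential N).wf.has_min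
    {S | S.Valid V} ⟨init, valid_init⟩
  refine ⟨S, hS, fun z hz => ?_⟩
  obtain ⟨S', hS', hlt⟩ := hS.exists_potential_lt hcard hV_anti hV_floor hz
  exact hmin S' hS' hlt

end State

theorem exists_envyFree_assignment [Fintype ι] [Fintype κ] [Nonempty ι]
    {V : ι → κ → ℕ → α} {N : ℕ} (hcard : Fintype.card ι < Fintype.card κ)
    (hV_anti : ∀ i k, Antitone (V i k)) (hV_floor : ∀ i k l q, V i k N ≤ V i l q) :
    ∃ (π : ι → κ) (p : κ → ℕ), Injective π ∧ (∀ i l, V i l (p l + 1) ≤ V i (π i) (p (π i))) ∧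
      (∃ k, k ∉ range π ∧ p k = 0) ∧ ∃ w, p (π w) = 0 := by
  obtain ⟨S, hS, hall⟩ := State.exists_valid_complete hcard hV_anti hV_floor
  choose π hπ using fun i => Option.ne_none_iff_exists'.1 (hall i)
  obtain ⟨k₀, hk₀⟩ := State.exists_not_held hcard S
  obtain ⟨w, k, hwk, hk⟩ := hS.exists_price_zero hall
  refine ⟨π, S.price, fun i j hij => hS.injective i j (π j) (hij ▸ hπ i) (hπ j),
    fun i => hS.envyFree i (π i) (hπ i), ⟨k₀, ?_, hS.price_of_not_held k₀ hk₀⟩, w, ?_⟩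
  · rintro ⟨i, rfl⟩
    exact hk₀ ⟨i, hπ i⟩
  · rwa [Option.some_injective _ ((hπ w).symm.trans hwk)]

end

end Auction

/-- The pieces are the intervals `[a k, b k]`; agent `i` receives the suffix `[x (σ i), b (σ i)]` of
piece `σ i` and compares it with the suffixes `[y l, b l]` of all pieces: for `y = x` this is
envy-freeness, for `y` slightly right of `x` an approximate version. -/
structure IsCoreAllocation {ι κ : Type*} (μ : ι → Measure ℝ) (a b : κ → ℝ) (c : ι) (σ : ι → κ)
    (x y : κ → ℝ) : Prop where
  injective : Injective σ
  mem_Icc : ∀ k, x k ∈ Icc (a k) (b k)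
  envyFree : ∀ i l, μ i (Icc (y l) (b l)) ≤ μ i (Icc (x (σ i)) (b (σ i)))
  cutter_complete : x (σ c) = a (σ c)
  exists_complete : ∃ w ≠ c, x (σ w) = a (σ w)

variable {ι κ : Type*} {μ : ι → Measure ℝ} {a b : κ → ℝ} {c : ι}

lemma exists_isCoreAllocation_of_approx [Finite ι] [Finite κ]
    (hcont : ∀ i l, Continuous fun s => μ i (Icc s (b l)))
    (happrox : ∀ ε > 0, ∃ σ x y, IsCoreAllocation μ a b c σ x y ∧ ∀ k, x k ≤ y k ∧ y k ≤ x k + ε) :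
    ∃ σ x, IsCoreAllocation μ a b c σ x x := by
  choose σ x y hcore hxy using fun N : ℕ => happrox (1 / (N + 1)) Nat.one_div_pos_of_nat
  choose w hwc hw using fun N => (hcore N).exists_complete
  let U : Ultrafilter ℕ := .of atTop
  obtain ⟨⟨σ₀, w₀⟩, hU⟩ := U.exists_eventually_eq fun N => (σ N, w N)
  simp only [Prod.mk.injEq] at hU
  choose x₀ hx₀ hx using fun k =>
    isCompact_Icc.exists_tendsto_ultrafilter U fun N => (hcore N).mem_Icc k
  have hy : ∀ k, Tendsto (fun N => y N k) U (𝓝 (x₀ k)) := fun k => by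
    have hδ : Tendsto (fun N : ℕ => 1 / ((N : ℝ) + 1)) U (𝓝 0) :=
      tendsto_one_div_add_atTop_nhds_zero_nat.mono_left (Ultrafilter.of_le _)
    refine tendsto_of_tendsto_of_tendsto_of_le_of_le (hx k) (by simpa using (hx k).add hδ)
      (fun N => (hxy N k).1) fun N => (hxy N k).2
  obtain ⟨N, ⟨hσN, hwN⟩⟩ := hU.exists
  refine ⟨σ₀, x₀, ⟨hσN ▸ (hcore N).injective, hx₀, fun i l => ?_, ?_, w₀, hwN ▸ hwc N, ?_⟩⟩
  · refine le_of_tendsto_of_tendsto (((hcont i l).tendsto _).comp (hy l))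
      (((hcont i (σ₀ i)).tendsto _).comp (hx (σ₀ i))) (hU.mono fun N hN => ?_)
    simpa only [comp_apply, hN.1] using (hcore N).envyFree i l
  · refine tendsto_nhds_unique_of_eventuallyEq (hx (σ₀ c)) tendsto_const_nhds
      (hU.mono fun N hN => ?_)
    simpa only [hN.1] using (hcore N).cutter_complete
  · refine tendsto_nhds_unique_of_eventuallyEq (hx (σ₀ w₀)) tendsto_const_nhds
      (hU.mono fun N hN => ?_)
    simpa only [hN.1, hN.2] using hw N

lemma exists_approx_isCoreAllocation [Fintype ι] [Fintype κ] [Nontrivial ι]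
    (hcard : Fintype.card ι ≤ Fintype.card κ) (hab : ∀ k, a k ≤ b k) (hμ : ∀ i k, μ i {b k} = 0)
    (hcut : ∀ k l, μ c (Icc (a k) (b k)) = μ c (Icc (a l) (b l))) {ε : ℝ} (hε : 0 < ε) :
    ∃ σ x y, IsCoreAllocation μ a b c σ x y ∧ ∀ k, x k ≤ y k ∧ y k ≤ x k + ε := by
  classical
  obtain ⟨N, hN⟩ : ∃ N : ℕ, ∀ k, b k ≤ a k + N * ε := by
    obtain ⟨M, hM⟩ := Finite.exists_le fun k => (b k - a k) / ε
    obtain ⟨N, hN⟩ := exists_nat_ge M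
    refine ⟨N, fun k => ?_⟩
    have := (div_le_iff₀ hε).1 ((hM k).trans hN)
    linarith
  let tp k := trimPoint (a k) (b k) ε
  let V (i : {i // i ≠ c}) k p := μ i (Icc (tp k p) (b k))
  have hV_anti : ∀ i k, Antitone (V i k) := fun i k p q hpq =>
    measure_mono (Icc_subset_Icc_left (trimPoint_mono hε.le hpq))
  have hV_floor : ∀ i k l q, V i k N ≤ V i l q := fun i k l q => by
    simp [V, tp, trimPoint_of_le (hN k), hμ]
  have hcard' : Fintype.card {i // i ≠ c} < Fintype.card κ :=
    (Fintype.card_subtype_lt (p := (· ≠ c)) (not_not.2 rfl)).trans_le hcard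
  have : Nonempty {i // i ≠ c} := let ⟨i, hi⟩ := exists_ne c; ⟨⟨i, hi⟩⟩
  obtain ⟨π, p, hπ, hef, ⟨k₀, hk₀, hpk₀⟩, w, hw⟩ :=
    Auction.exists_envyFree_assignment hcard' hV_anti hV_floor
  let σ i := if h : i = c then k₀ else π ⟨i, h⟩
  have hx₀ : tp k₀ (p k₀) = a k₀ := by rw [hpk₀]; exact trimPoint_zero (hab k₀)
  refine ⟨σ, fun k => tp k (p k), fun k => tp k (p k + 1), ⟨?_, fun k => ?_, fun i l => ?_, ?_, ?_⟩,
    fun k => ⟨trimPoint_mono hε.le (Nat.le_succ _), trimPoint_succ_le hε.le _⟩⟩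
  · exact Injective.dite (· = c) (f := fun _ => k₀)
      (fun i j _ => Subtype.ext (i.2.trans j.2.symm)) hπ fun {_ i _ hi} h => hk₀ ⟨⟨i, hi⟩, h.symm⟩
  · exact trimPoint_mem_Icc (hab k) hε.le _
  · by_cases hi : i = c
    · subst hi
      simp only [σ, dif_pos, hx₀]
      rw [← hcut l k₀]
      exact measure_mono (Icc_subset_Icc_left (trimPoint_mem_Icc (hab l) hε.le _).1)
    · simpa [σ, hi] using hef ⟨i, hi⟩ l
  · simpa [σ] using hx₀
  · refine ⟨w, w.2, ?_⟩
    simp only [σ, dif_neg w.2, tp, hw]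
    exact trimPoint_zero (hab _)

/-- Existence content of the Core Protocol: agent `⟨0,_⟩` (the cutter) cuts the cake
into `n` pieces he values `1/n` each, via cut points `t 0 = 0 ≤ t 1 ≤ ⋯ ≤ t n = 1`;
there are an injective assignment `σ` of agents to pieces and points
`s i ∈ [t (σ i), t (σ i + 1)]` such that the partial allocation giving agent `i` the
suffix `[s i, t (σ i + 1)]` of piece `σ i` is envy-free, the cutter gets a complete
piece, and at least one non-cutter agent gets a complete piece. -/
theorem core_protocol_exists
    (n : ℕ) (hn : 2 ≤ n)
    (μ : Fin n → Measure ℝ)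
    (hprob : ∀ i, IsProbabilityMeasure (μ i))
    (hsupp : ∀ i, μ i (Set.Icc (0:ℝ) 1) = 1)
    (hna : ∀ i, NoAtoms (μ i)) :
    ∃ (t : Fin (n + 1) → ℝ) (σ : Fin n → Fin n) (s : Fin n → ℝ),
      t 0 = 0 ∧ t (Fin.last n) = 1 ∧ Monotone t ∧
      (∀ k : Fin n,
        μ ⟨0, by omega⟩ (Set.Icc (t k.castSucc) (t k.succ)) = (n : ℝ≥0∞)⁻¹) ∧
      Function.Injective σ ∧
      (∀ i, t (σ i).castSucc ≤ s i ∧ s i ≤ t (σ i).succ) ∧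
      (∀ i j, μ i (Set.Icc (s j) (t (σ j).succ)) ≤ μ i (Set.Icc (s i) (t (σ i).succ))) ∧
      s ⟨0, by omega⟩ = t (σ ⟨0, by omega⟩).castSucc ∧
      (∃ i : Fin n, i ≠ ⟨0, by omega⟩ ∧ s i = t (σ i).castSucc) := by
  have := hprob
  have : ∀ i, NullSingletonClass (μ i) := hna
  have : Nontrivial (Fin n) := Fin.nontrivial_iff_two_le.2 hn
  let c : Fin n := ⟨0, by omega⟩
  obtain ⟨h0, h1⟩ := cdf_eq_zero_and_eq_one_of_measure_Icc (hsupp c)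
  obtain ⟨t, ht0, ht1, ht_mono, ht⟩ :=
    exists_monotone_cuts continuous_cdf (monotone_cdf (μ c)) zero_le_one h0 h1 (by omega : 0 < n)
  have hpiece : ∀ k : Fin n, μ c (Icc (t k.castSucc) (t k.succ)) = (n : ℝ≥0∞)⁻¹ := fun k => by
    rw [measure_Icc_eq_ofReal_cdf_sub, ht, ht, Fin.val_castSucc, Fin.val_succ, Nat.cast_succ,
      ← sub_div, add_sub_cancel_left, one_div, ENNReal.ofReal_inv_of_pos (by positivity),
      ENNReal.ofReal_natCast]
  obtain ⟨σ, x, h⟩ := exists_isCoreAllocation_of_approx (c := c)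
    (fun i l => continuous_measure_Icc_left _) fun ε hε =>
      exists_approx_isCoreAllocation le_rfl (fun k => ht_mono k.castSucc_le_succ)
        (fun i k => measure_singleton _) (fun k l => by rw [hpiece, hpiece]) hε
  exact ⟨t, σ, fun i => x (σ i), ht0, ht1, ht_mono, hpiece, h.injective, fun i => h.mem_Icc (σ i),
    fun i j => h.envyFree i (σ j), h.cutter_complete, h.exists_complete⟩
end

section
/- Let E be a relation (directed graph) on a finite vertex set V, let T ⊆ V be nonempty, and write T' = V \ T. Suppose (i) every vertex of V has at least one in-neighbor, and (ii) every vertex of V has an edge to every vertex of T'. Then there exists a directed cycle containing at least one vertex of T: there are k ≥ 1 and vertices v_0, v_1, …, v_k with v_0 = v_k ∈ T and an edge from v_m to v_{m+1} for every m < k. (This is the claim that the permutation graph in the GoLeft Protocol always contains a cycle through a node of T.) -/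
/-!
Choose for every vertex an in-neighbour and walk backwards from some `t ∈ T`. In a finite graph
this walk eventually runs around a cycle, through some vertex `u`, and `u` reaches `t`. If
`u ∈ T`, that cycle is the one wanted; otherwise the edge `t → u` closes the path `u →* t`
into a cycle through `t`.
-/

open Function Relation

theorem Function.exists_iterate_mem_periodicPts {α : Type*} [Finite α] (f : α → α) (x : α) :
    ∃ n, f^[n] x ∈ periodicPts f := by
  obtain ⟨i, j, hij, heq⟩ :=
    Set.finite_univ.exists_lt_map_eq_of_forall_mem (f := fun n ↦ f^[n] x) fun _ ↦ Set.mem_univ _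
  refine ⟨i, mk_mem_periodicPts (Nat.sub_pos_of_lt hij) ?_⟩
  change f^[j - i] (f^[i] x) = f^[i] x
  rw [← iterate_add_apply, Nat.sub_add_cancel hij.le]
  exact heq.symm

namespace Relation

variable {α : Type*} {r : α → α → Prop}

theorem TransGen.exists_seq {a b : α} (h : TransGen r a b) :
    ∃ (k : ℕ) (f : ℕ → α), 1 ≤ k ∧ f 0 = a ∧ f k = b ∧ ∀ m < k, r (f m) (f (m + 1)) := by
  induction h using TransGen.head_induction_on with
  | @single a hab => exact ⟨1, fun m ↦ if m = 0 then a else b, le_rfl, rfl, rfl, by simpa using hab⟩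
  | @head a c hac _ ih =>
    obtain ⟨k, f, -, hf0, hfk, hf⟩ := ih
    refine ⟨k + 1, fun | 0 => a | m + 1 => f m, by omega, rfl, hfk, ?_⟩
    rintro (_ | m) hm
    · simpa [hf0] using hac
    · exact hf m (by omega)

variable {p : α → α}

theorem reflTransGen_iterate (hp : ∀ v, r (p v) v) (n : ℕ) (v : α) : ReflTransGen r (p^[n] v) v := by
  induction n generalizing v with
  | zero => exact .refl
  | succ n ih => exact (ih (p v)).tail (hp v)

theorem transGen_iterate (hp : ∀ v, r (p v) v) {n : ℕ} (hn : 0 < n) (v : α) : TransGen r (p^[n] v) v := by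
  obtain ⟨n, rfl⟩ := Nat.exists_eq_add_of_lt hn
  rw [Nat.zero_add, iterate_succ_apply']
  exact .head' (hp _) (reflTransGen_iterate hp n v)

end Relation

theorem Relation.exists_transGen_self_reflTransGen {α : Type*} [Finite α] {r : α → α → Prop}
    (hin : ∀ w, ∃ u, r u w) (x : α) : ∃ u, TransGen r u u ∧ ReflTransGen r u x := by
  choose p hp using hin
  obtain ⟨n, k, hk, hper⟩ := exists_iterate_mem_periodicPts p x
  refine ⟨p^[n] x, ?_, reflTransGen_iterate hp n x⟩
  simpa only [hper.eq] using transGen_iterate hp hk (p^[n] x)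

/-- GoLeft Protocol cycle claim: if every vertex of a finite directed graph has an
in-neighbor, and every vertex has an edge to every vertex outside the nonempty set
`T`, then there is a directed cycle through some vertex of `T`. -/
theorem cycle_through_T_exists
    (V : Type*) [Fintype V]
    (E : V → V → Prop) (T : Set V) (hT : T.Nonempty)
    (hdeg : ∀ w : V, ∃ u : V, E u w)
    (hT' : ∀ u w : V, w ∉ T → E u w) :
    ∃ (k : ℕ) (f : ℕ → V),
      1 ≤ k ∧ f 0 = f k ∧ f 0 ∈ T ∧ ∀ m < k, E (f m) (f (m + 1)) := by
  obtain ⟨t, ht⟩ := hT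
  obtain ⟨u, hcycle, hut⟩ := exists_transGen_self_reflTransGen hdeg t
  have ⟨v, hvT, hv⟩ : ∃ v ∈ T, TransGen E v v := by
    by_cases hu : u ∈ T
    · exact ⟨u, hu, hcycle⟩
    · exact ⟨t, ht, .head' (hT' t u hu) hut⟩
  obtain ⟨k, f, hk, hf0, hfk, hf⟩ := hv.exists_seq
  exact ⟨k, f, hk, hf0.trans hfk.symm, hf0 ▸ hvT, hf⟩
end

section
/- A significant advantage becomes dominance in a bounded number of Core iterations: for every natural number n ≥ 3, one has ((n−2)/n)^(n²) < 1/(n−2) (as real numbers). Hence if the cutter's bonus over some agent is at least a 1/(n−2) fraction of his value of the residue, then after n² further iterations of the Core Protocol with the same cutter — each of which multiplies the cutter's value of the residue by at most (n−2)/n — the cutter's value of the residue drops below his bonus, so the cutter dominates that agent. -/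
/-!
Since `(n - 2) / n = 1 - 2 / n` and `(1 - 2 / n) ^ n ≤ exp (-2)`, the left-hand side is at most
`exp (-2 n)`, which is smaller than `1 / (n - 2)` because `exp (2 n) ≥ 2 n + 1 > n - 2`.
-/

open Real

lemma sub_two_div_pow_sq_le_exp (n : ℕ) (hn : 2 ≤ n) :
    (((n : ℝ) - 2) / n) ^ (n ^ 2) ≤ exp (-(2 * n)) := by
  have hn' : (2 : ℝ) ≤ n := by exact_mod_cast hn
  have hbase : ((n : ℝ) - 2) / n = 1 - 2 / n := by field_simp
  calc (((n : ℝ) - 2) / n) ^ (n ^ 2) = ((1 - 2 / n) ^ n) ^ n := by rw [hbase, sq, pow_mul]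
    _ ≤ exp (-2) ^ n :=
      pow_le_pow_left₀ (by rw [← hbase]; positivity) (one_sub_div_pow_le_exp_neg hn') n
    _ = exp (-(2 * n)) := by rw [← exp_nat_mul]; ring_nf

lemma exp_neg_two_mul_lt_one_div_sub_two {x : ℝ} (hx : 2 < x) :
    exp (-(2 * x)) < 1 / (x - 2) := by
  rw [exp_neg, one_div, inv_lt_inv₀ (exp_pos _) (by linarith)]
  linarith [add_one_le_exp (2 * x)]

/-- A significant advantage becomes dominance in a bounded number of Core iterations:
for `n ≥ 3`, `((n−2)/n)^(n²) < 1/(n−2)`. -/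
theorem significant_advantage_becomes_dominance
    (n : ℕ) (hn : 3 ≤ n) :
    (((n : ℝ) - 2) / n) ^ (n ^ 2) < 1 / ((n : ℝ) - 2) :=
  (sub_two_div_pow_sq_le_exp n (by omega)).trans_lt
    (exp_neg_two_mul_lt_one_div_sub_two (by exact_mod_cast hn))
end
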